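/- Let Γ1 be a balanced signed graph on n1 vertices with adjacency matrix A1 and marking μ1, and let Γ2 be a signed star on n2+1 vertices (n2 ≥ 1) with edge signs σ_j ∈ {−1,1} and canonical marking μ2. Then det(x·I − A(Γ1⊛Γ2)) = x^{n1(n2−1)} · det( (x⁴ − (2n2+1)·x² − 2n2·μ2(v1)·x)·I_{n1} − (x² − n2)·A1² ); equivalently, the spectrum of Γ1⊛Γ2 consists of the eigenvalue 0 with multiplicity n1(n2−1) together with, for each eigenvalue λ of A1, the four roots of x⁴ − (2n2+1+λ²)·x² − 2n2·μ2(v1)·x + n2·λ² = 0. -/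

import Mathlib

open Matrix Kronecker BigOperators

/-- The block `μ₂ᵀ ⊗ Φ₁`, where `Φ₁ = diag μ₁` and `μ₂` is regarded as an `n₂×1`
column vector: an `n₁ × (n₂·n₁)` matrix. -/
noncomputable def muBlock {n1 n2 : ℕ} (μ1 : Fin n1 → ℝ) (μ2 : Fin n2 → ℝ) :
    Matrix (Fin n1) (Fin n2 × Fin n1) ℝ :=
  Matrix.of fun i jk => μ2 jk.1 * Matrix.diagonal μ1 i jk.2

/-- Adjacency matrix of the duplication add vertex corona `Γ₁ ⊛ Γ₂`, in `3×3` block form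
`[[0, A₁μ, 0], [A₁μ, 0, μ₂ᵀ⊗Φ₁], [0, μ₂⊗Φ₁, A₂⊗I]]` (blocks of sizes `n₁, n₁, n₁·n₂`),
where `A₁μ = Φ₁·|A₁|·Φ₁` is supplied as a parameter. -/
noncomputable def coronaStar {n1 n2 : ℕ} (A1μ : Matrix (Fin n1) (Fin n1) ℝ)
    (A2 : Matrix (Fin n2) (Fin n2) ℝ) (μ1 : Fin n1 → ℝ) (μ2 : Fin n2 → ℝ) :
    Matrix ((Fin n1 ⊕ Fin n1) ⊕ Fin n2 × Fin n1)
      ((Fin n1 ⊕ Fin n1) ⊕ Fin n2 × Fin n1) ℝ :=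
  Matrix.fromBlocks
    (Matrix.fromBlocks 0 A1μ A1μ 0)
    (Matrix.fromRows (0 : Matrix (Fin n1) (Fin n2 × Fin n1) ℝ) (muBlock μ1 μ2))
    (Matrix.fromCols (0 : Matrix (Fin n2 × Fin n1) (Fin n1) ℝ) (muBlock μ1 μ2)ᵀ)
    (A2 ⊗ₖ (1 : Matrix (Fin n1) (Fin n1) ℝ))

/-! Since `Φ₁² = I`, the Schur complement of the block `(x - A₂) ⊗ I` collapses the corona to
the `2n₁ × 2n₁` matrix `[[x, -A₁μ], [-A₁μ, x - χ(x)]]`, where `χ(x) = μ₂ᵀ (x - A₂)⁻¹ μ₂` is the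
coronal of `Γ₂`; its determinant is `det (x (x - χ(x)) - A₁μ²)`. Balance makes `A₁μ = G A₁ G` for a
signature matrix `G`, so `A₁μ²` may be replaced by `A₁²`. For the star,
`det (x - A₂) = x^{n₂-1} (x² - n₂)` and `χ(x) = ((n₂+1) x + 2 n₂ μ₂(v₁)) / (x² - n₂)`. This proves
the identity away from `x = 0` and `x² = n₂`, and both sides are continuous in `x`. -/

section Determinant

variable {R K m n : Type*} [CommRing R] [Field K] [Fintype m] [DecidableEq m] [Fintype n]
  [DecidableEq n]

theorem det_conj_of_mul_self_eq_one {G : Matrix n n R} (hG : G * G = 1) (X : Matrix n n R) :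
    (G * X * G).det = X.det := by
  rw [det_mul, det_mul, mul_right_comm, ← det_mul, hG, det_one, one_mul]

theorem det_smul_one_sub_conj_sq {G : Matrix n n R} (hG : G * G = 1) (X : Matrix n n R) (c : R) :
    (c • 1 - (G * X * G) ^ 2).det = (c • 1 - X ^ 2).det := by
  have hconj : c • 1 - (G * X * G) ^ 2 = G * (c • 1 - X ^ 2) * G := by
    simp only [sq, Matrix.mul_sub, Matrix.sub_mul, Matrix.mul_smul, Matrix.smul_mul, Matrix.mul_one,
      hG, Matrix.mul_assoc]
    simp only [← Matrix.mul_assoc G G, hG, Matrix.one_mul]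
  rw [hconj, det_conj_of_mul_self_eq_one hG]

theorem det_fromBlocks_smul_one₁₁ {a : K} (ha : a ≠ 0) (B : Matrix m n K) (C : Matrix n m K)
    (D : Matrix n n K) :
    (fromBlocks (a • 1) B C D).det = a ^ Fintype.card m * (D - a⁻¹ • (C * B)).det := by
  let _ : Invertible (a • (1 : Matrix m m K)) := invertibleOfRightInverse _ (a⁻¹ • 1) (by
    rw [smul_mul_smul, Matrix.one_mul, mul_inv_cancel₀ ha, one_smul])
  have hinv : ⅟(a • (1 : Matrix m m K)) = a⁻¹ • 1 := rfl
  rw [det_fromBlocks₁₁, hinv, Matrix.mul_smul, Matrix.mul_one, Matrix.smul_mul, det_smul, det_one,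
    mul_one]

theorem det_fromBlocks_smul_one_smul_one {a : K} (ha : a ≠ 0) (d : K) (B C : Matrix n n K) :
    (fromBlocks (a • 1) B C (d • 1)).det = ((a * d) • 1 - C * B).det := by
  rw [det_fromBlocks_smul_one₁₁ ha, ← det_smul, smul_sub, smul_smul, smul_smul,
    mul_inv_cancel₀ ha, one_smul]

end Determinant

theorem diagonal_mul_abs_mul_diagonal_of_balanced {n : Type*} [Fintype n] [DecidableEq n]
    {A : Matrix n n ℝ} {ε : n → ℝ} (hbal : diagonal ε * A * diagonal ε = A.map abs) (μ : n → ℝ) :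
    diagonal μ * A.map abs * diagonal μ = diagonal (μ * ε) * A * diagonal (μ * ε) := by
  have hμε : diagonal (μ * ε) = diagonal μ * diagonal ε := (diagonal_mul_diagonal μ ε).symm
  have hεμ : diagonal (μ * ε) = diagonal ε * diagonal μ := by
    rw [mul_comm]; exact (diagonal_mul_diagonal ε μ).symm
  rw [← hbal]
  nth_rewrite 1 [hμε]
  rw [hεμ]
  simp only [Matrix.mul_assoc]

section Corona

variable {n1 n2 : ℕ}

noncomputable def coronal {m : Type*} [Fintype m] [DecidableEq m] (A : Matrix m m ℝ) (μ : m → ℝ)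
    (x : ℝ) : ℝ :=
  μ ⬝ᵥ (x • 1 - A)⁻¹ *ᵥ μ

theorem muBlock_mul_kronecker_one_mul_transpose (a b : Fin n1 → ℝ) (μ : Fin n2 → ℝ)
    (S : Matrix (Fin n2) (Fin n2) ℝ) :
    muBlock a μ * (S ⊗ₖ (1 : Matrix (Fin n1) (Fin n1) ℝ)) * (muBlock b μ)ᵀ =
      (μ ⬝ᵥ S *ᵥ μ) • diagonal (a * b) := by
  ext i i'
  simp only [muBlock, diagonal_apply, mul_ite, mul_zero, Matrix.mul_apply, of_apply,
    kroneckerMap_apply, one_apply, mul_one, ite_mul, zero_mul, Fintype.sum_prod_type,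
    Finset.sum_ite_eq', Finset.mem_univ, ↓reduceIte, Finset.sum_ite_irrel, Finset.sum_const_zero,
    transpose_apply, Finset.sum_ite_eq, dotProduct, mulVec, Matrix.smul_apply, Pi.mul_apply,
    smul_eq_mul]
  split_ifs with h
  · subst h
    simp only [Finset.sum_mul, Finset.mul_sum]
    rw [Finset.sum_comm]
    exact Finset.sum_congr rfl fun _ _ => Finset.sum_congr rfl fun _ _ => by ring
  · rfl

theorem smul_one_sub_coronaStar (x : ℝ) (B : Matrix (Fin n1) (Fin n1) ℝ)
    (A2 : Matrix (Fin n2) (Fin n2) ℝ) (μ1 : Fin n1 → ℝ) (μ2 : Fin n2 → ℝ) :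
    x • 1 - coronaStar B A2 μ1 μ2 =
      fromBlocks (fromBlocks (x • 1) (-B) (-B) (x • 1)) (fromRows 0 (-muBlock μ1 μ2))
        (fromCols 0 (-(muBlock μ1 μ2)ᵀ)) ((x • 1 - A2) ⊗ₖ (1 : Matrix (Fin n1) (Fin n1) ℝ)) := by
  ext ((i | i) | ⟨j, i⟩) ((i' | i') | ⟨j', i'⟩) <;>
    simp [coronaStar, one_apply, Prod.ext_iff, and_comm, ite_and, ite_sub_ite]

theorem det_smul_one_sub_coronaStar {x : ℝ} (hx : x ≠ 0) (B : Matrix (Fin n1) (Fin n1) ℝ)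
    {A2 : Matrix (Fin n2) (Fin n2) ℝ} (hA2 : IsUnit (x • 1 - A2).det) {μ1 : Fin n1 → ℝ}
    (hμ1 : ∀ i, μ1 i * μ1 i = 1) (μ2 : Fin n2 → ℝ) :
    (x • 1 - coronaStar B A2 μ1 μ2).det =
      (x • 1 - A2).det ^ n1 * ((x * (x - coronal A2 μ2 x)) • 1 - B * B).det := by
  let R := (x • 1 - A2) ⊗ₖ (1 : Matrix (Fin n1) (Fin n1) ℝ)
  let _ : Invertible R := invertibleOfIsUnitDet R (by simpa [R, det_kronecker] using hA2.pow n1)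
  have hinv : ⅟R = (x • 1 - A2)⁻¹ ⊗ₖ (1 : Matrix (Fin n1) (Fin n1) ℝ) := by
    rw [invOf_eq_nonsing_inv, inv_kronecker, inv_one]
  have hμ1 : μ1 * μ1 = 1 := funext hμ1
  rw [smul_one_sub_coronaStar, det_fromBlocks₂₂, hinv, det_kronecker, det_one, one_pow, mul_one,
    fromRows_mul, fromRows_mul_fromCols]
  simp only [Matrix.zero_mul, Matrix.mul_zero, Matrix.neg_mul, Matrix.mul_neg, neg_neg,
    muBlock_mul_kronecker_one_mul_transpose, hμ1, neg_zero]
  have hblocks : fromBlocks (x • 1) (-B) (-B) (x • 1) -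
      fromBlocks 0 0 0 (coronal A2 μ2 x • diagonal 1) =
      fromBlocks (x • 1) (-B) (-B) ((x - coronal A2 μ2 x) • 1) := by
    ext (i | i) (j | j) <;> simp [sub_smul]
  rw [← coronal, hblocks, det_fromBlocks_smul_one_smul_one hx, neg_mul_neg, Fintype.card_fin]

end Corona

def signedStar {k : ℕ} (σ : Fin k → ℝ) : Matrix (Fin (k + 1)) (Fin (k + 1)) ℝ :=
  of <| Fin.cons (Fin.cons 0 σ) fun l => Fin.cons (σ l) 0

section SignedStar

variable {k : ℕ} (σ : Fin k → ℝ)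

@[simp] theorem signedStar_zero_zero : signedStar σ 0 0 = 0 := rfl
@[simp] theorem signedStar_zero_succ (j : Fin k) : signedStar σ 0 j.succ = σ j := rfl
@[simp] theorem signedStar_succ_zero (j : Fin k) : signedStar σ j.succ 0 = σ j := rfl
@[simp] theorem signedStar_succ_succ (i j : Fin k) : signedStar σ i.succ j.succ = 0 := rfl

theorem eq_signedStar {A : Matrix (Fin (k + 1)) (Fin (k + 1)) ℝ} (h00 : A 0 0 = 0)
    (h0s : ∀ j : Fin k, A 0 j.succ = σ j) (hs0 : ∀ j : Fin k, A j.succ 0 = σ j)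
    (hss : ∀ i j : Fin k, A i.succ j.succ = 0) : A = signedStar σ := by
  ext i j
  cases i using Fin.cases <;> cases j using Fin.cases <;> simp [*]

variable {σ}

theorem det_smul_one_sub_signedStar (hσ : ∀ j, σ j * σ j = 1) (hk : 1 ≤ k) {x : ℝ} (hx : x ≠ 0) :
    (x • 1 - signedStar σ).det = x ^ (k - 1) * (x ^ 2 - k) := by
  let e : Fin (k + 1) ≃ Fin k ⊕ Unit := (finSuccEquiv k).trans (Equiv.optionEquivSumPUnit _)
  have hblocks : (x • 1 - signedStar σ).submatrix e.symm e.symm =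
      fromBlocks (x • 1) (-replicateCol Unit σ) (-replicateRow Unit σ) (x • 1) := by
    ext (i | _) (j | _) <;>
      simp [e, one_apply, Fin.succ_ne_zero, fun j : Fin k => (Fin.succ_ne_zero j).symm]
  rw [← det_submatrix_equiv_self e.symm, hblocks, det_fromBlocks_smul_one₁₁ hx, det_unique,
    Fintype.card_fin]
  simp only [Matrix.mul_neg, Matrix.neg_mul, neg_neg, PUnit.default_eq_unit, Matrix.sub_apply,
    Matrix.smul_apply, one_apply_eq, smul_eq_mul, mul_one, replicateRow_mul_replicateCol_apply,
    dotProduct, hσ, Finset.sum_const, Finset.card_univ, Fintype.card_fin, nsmul_eq_mul]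
  obtain ⟨k, rfl⟩ := Nat.exists_eq_add_of_le' hk
  rw [Nat.add_sub_cancel, pow_succ]
  field_simp

theorem isUnit_det_smul_one_sub_signedStar (hσ : ∀ j, σ j * σ j = 1) (hk : 1 ≤ k) {x : ℝ}
    (hx : x ≠ 0) (hxk : x ^ 2 - k ≠ 0) : IsUnit (x • 1 - signedStar σ).det := by
  rw [det_smul_one_sub_signedStar hσ hk hx]
  exact (mul_ne_zero (pow_ne_zero _ hx) hxk).isUnit

theorem smul_one_sub_signedStar_mulVec_zero (x : ℝ) (v : Fin (k + 1) → ℝ) :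
    ((x • 1 - signedStar σ) *ᵥ v) 0 = x * v 0 - ∑ j, σ j * v j.succ := by
  simp [mulVec, dotProduct, Fin.sum_univ_succ, one_apply,
    fun j : Fin k => (Fin.succ_ne_zero j).symm, sub_eq_add_neg]

theorem smul_one_sub_signedStar_mulVec_succ (x : ℝ) (v : Fin (k + 1) → ℝ) (i : Fin k) :
    ((x • 1 - signedStar σ) *ᵥ v) i.succ = x * v i.succ - σ i * v 0 := by
  simp [mulVec, dotProduct, Fin.sum_univ_succ, one_apply, Fin.succ_ne_zero, sub_eq_neg_add]

theorem coronal_signedStar (hσ : ∀ j, σ j * σ j = 1) (hk : 1 ≤ k) {μ : Fin (k + 1) → ℝ}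
    (hμ : ∀ j, μ j.succ = σ j) (hμ0 : μ 0 * μ 0 = 1) {x : ℝ} (hx : x ≠ 0) (hxk : x ^ 2 - k ≠ 0) :
    coronal (signedStar σ) μ x = ((k + 1) * x + 2 * k * μ 0) / (x ^ 2 - k) := by
  -- the leaf rows force `y j = σ j * (1 + y₀) / x`, and then the centre row determines `y₀`
  set y₀ := (μ 0 * x + k) / (x ^ 2 - k)
  have hσσ (c : ℝ) : ∑ j, σ j * (σ j * c) = k * c := by simp [← mul_assoc, hσ]
  have hsol : μ = (x • 1 - signedStar σ) *ᵥ Fin.cons y₀ fun j => σ j * ((1 + y₀) / x) := by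
    ext i
    cases i using Fin.cases
    · rw [smul_one_sub_signedStar_mulVec_zero]
      simp only [Fin.cons_zero, Fin.cons_succ, hσσ, y₀]
      field_simp
      ring
    · rw [smul_one_sub_signedStar_mulVec_succ, hμ]
      simp only [Fin.cons_zero, Fin.cons_succ]
      field_simp
      ring
  let _ := invertibleOfIsUnitDet _ (isUnit_det_smul_one_sub_signedStar hσ hk hx hxk)
  rw [coronal, inv_mulVec_eq_vec hsol, dotProduct, Fin.sum_univ_succ]
  simp only [Fin.cons_zero, Fin.cons_succ, hμ, hσσ, y₀]
  field_simp
  linear_combination x ^ 2 * hμ0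

end SignedStar

theorem det_smul_one_sub_coronaStar_signedStar {n1 n2 : ℕ} (hn2 : 1 ≤ n2)
    {A1 : Matrix (Fin n1) (Fin n1) ℝ} {μ1 ε : Fin n1 → ℝ} (hμ1 : ∀ i, μ1 i * μ1 i = 1)
    (hε : ∀ i, ε i * ε i = 1) (hbal : diagonal ε * A1 * diagonal ε = A1.map abs)
    {σ : Fin n2 → ℝ} (hσ : ∀ j, σ j * σ j = 1) {μ2 : Fin (n2 + 1) → ℝ}
    (hμ2 : ∀ j, μ2 j.succ = σ j) (hμ20 : μ2 0 * μ2 0 = 1) {x : ℝ} (hx : x ≠ 0)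
    (hxn : x ^ 2 - n2 ≠ 0) :
    (x • 1 - coronaStar (diagonal μ1 * A1.map abs * diagonal μ1) (signedStar σ) μ1 μ2).det =
      x ^ (n1 * (n2 - 1)) *
        ((x ^ 4 - (2 * (n2 : ℝ) + 1) * x ^ 2 - 2 * (n2 : ℝ) * μ2 0 * x) •
            (1 : Matrix (Fin n1) (Fin n1) ℝ) - (x ^ 2 - (n2 : ℝ)) • A1 ^ 2).det := by
  have hG : diagonal (μ1 * ε) * diagonal (μ1 * ε) = 1 := by
    rw [diagonal_mul_diagonal, ← diagonal_one]
    congr 1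
    ext i
    simp only [Pi.mul_apply]
    linear_combination ε i * ε i * hμ1 i + hε i
  set γ := coronal (signedStar σ) μ2 x
  have hγ : γ = ((n2 + 1) * x + 2 * n2 * μ2 0) / (x ^ 2 - n2) :=
    coronal_signedStar hσ hn2 hμ2 hμ20 hx hxn
  have hpoly : (x ^ 4 - (2 * (n2 : ℝ) + 1) * x ^ 2 - 2 * (n2 : ℝ) * μ2 0 * x) •
        (1 : Matrix (Fin n1) (Fin n1) ℝ) - (x ^ 2 - (n2 : ℝ)) • A1 ^ 2 =
      (x ^ 2 - (n2 : ℝ)) • ((x * (x - γ)) • 1 - A1 ^ 2) := by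
    rw [smul_sub, smul_smul, hγ]
    congr 2
    field_simp
    ring
  rw [det_smul_one_sub_coronaStar hx _ (isUnit_det_smul_one_sub_signedStar hσ hn2 hx hxn) hμ1,
    det_smul_one_sub_signedStar hσ hn2 hx, diagonal_mul_abs_mul_diagonal_of_balanced hbal, ← sq,
    det_smul_one_sub_conj_sq hG, hpoly, det_smul, Fintype.card_fin, mul_pow, pow_mul]
  ring

theorem corona_adjacency_star_general (n1 n2 : ℕ) (hn2 : 1 ≤ n2)
    (A1 : Matrix (Fin n1) (Fin n1) ℝ)
    (μ1 : Fin n1 → ℝ) (hμ1 : ∀ i, μ1 i = 1 ∨ μ1 i = -1)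
    (hbal1 : ∃ ε : Fin n1 → ℝ, (∀ i, ε i = 1 ∨ ε i = -1) ∧
      Matrix.diagonal ε * A1 * Matrix.diagonal ε = A1.map abs)
    (σ : Fin n2 → ℝ) (hσ : ∀ j, σ j = 1 ∨ σ j = -1)
    (A2 : Matrix (Fin (n2 + 1)) (Fin (n2 + 1)) ℝ)
    (hA2c : A2 0 0 = 0)
    (hA2row : ∀ j : Fin n2, A2 0 j.succ = σ j)
    (hA2col : ∀ j : Fin n2, A2 j.succ 0 = σ j)
    (hA2leaf : ∀ j k : Fin n2, A2 j.succ k.succ = 0)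
    (μ2 : Fin (n2 + 1) → ℝ)
    (hμ2c : μ2 0 = ∏ j, σ j)
    (hμ2leaf : ∀ j : Fin n2, μ2 j.succ = σ j)
    (x : ℝ) :
    (x • 1 -
        coronaStar (Matrix.diagonal μ1 * A1.map abs * Matrix.diagonal μ1) A2 μ1 μ2).det
      = x ^ (n1 * (n2 - 1)) *
        ((x ^ 4 - (2 * (n2 : ℝ) + 1) * x ^ 2 - 2 * (n2 : ℝ) * μ2 0 * x) •
            (1 : Matrix (Fin n1) (Fin n1) ℝ)
          - (x ^ 2 - (n2 : ℝ)) • A1 ^ 2).det := by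
  obtain ⟨ε, hε, hbal⟩ := hbal1
  obtain rfl := eq_signedStar σ hA2c hA2row hA2col hA2leaf
  have hσ' : ∀ j, σ j * σ j = 1 := fun j => mul_self_eq_one_iff.2 (hσ j)
  have hμ20 : μ2 0 * μ2 0 = 1 := by
    rw [hμ2c, ← Finset.prod_mul_distrib]
    exact Finset.prod_eq_one fun j _ => hσ' j
  have hexc : ({0, √n2, -√n2} : Set ℝ).Countable := (Set.toFinite _).countable
  revert x
  rw [← funext_iff]
  refine Continuous.ext_on (hexc.dense_compl ℝ) (by fun_prop) (by fun_prop) fun y hy => ?_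
  simp only [Set.mem_compl_iff, Set.mem_insert_iff, Set.mem_singleton_iff, not_or] at hy
  obtain ⟨hy0, hyp, hyn⟩ := hy
  have hyn2 : y ^ 2 - n2 ≠ 0 := by
    rw [sub_ne_zero, ← Real.sq_sqrt (Nat.cast_nonneg n2), Ne, sq_eq_sq_iff_eq_or_eq_neg]
    exact not_or.2 ⟨hyp, hyn⟩
  exact det_smul_one_sub_coronaStar_signedStar hn2 (fun i => mul_self_eq_one_iff.2 (hμ1 i))
    (fun i => mul_self_eq_one_iff.2 (hε i)) hbal hσ' hμ2leaf hμ20 hy0 hyn2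

/-- For `Γ₁` balanced on `n₁` vertices and `Γ₂` a signed star on `n₂+1`
vertices (center `v₁ = 0`, leaf edge signs `σ_j`, canonical marking `μ₂`),
`det(x·I − A(Γ₁⊛Γ₂)) = x^{n₁(n₂−1)} · det((x⁴ − (2n₂+1)x² − 2n₂·μ₂(v₁)·x)·I_{n₁} − (x² − n₂)·A₁²)`. -/
theorem corona_adjacency_star (n1 n2 : ℕ) (hn2 : 1 ≤ n2)
    (A1 : Matrix (Fin n1) (Fin n1) ℝ) (hA1sym : A1.IsSymm) (hA1diag : ∀ i, A1 i i = 0)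
    (hA1ent : ∀ i j, A1 i j = 1 ∨ A1 i j = 0 ∨ A1 i j = -1)
    (μ1 : Fin n1 → ℝ) (hμ1 : ∀ i, μ1 i = 1 ∨ μ1 i = -1)
    (hbal1 : ∃ ε : Fin n1 → ℝ, (∀ i, ε i = 1 ∨ ε i = -1) ∧
      Matrix.diagonal ε * A1 * Matrix.diagonal ε = A1.map abs)
    (σ : Fin n2 → ℝ) (hσ : ∀ j, σ j = 1 ∨ σ j = -1)
    (A2 : Matrix (Fin (n2 + 1)) (Fin (n2 + 1)) ℝ)
    (hA2c : A2 0 0 = 0)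
    (hA2row : ∀ j : Fin n2, A2 0 j.succ = σ j)
    (hA2col : ∀ j : Fin n2, A2 j.succ 0 = σ j)
    (hA2leaf : ∀ j k : Fin n2, A2 j.succ k.succ = 0)
    (μ2 : Fin (n2 + 1) → ℝ)
    (hμ2c : μ2 0 = ∏ j, σ j)
    (hμ2leaf : ∀ j : Fin n2, μ2 j.succ = σ j)
    (x : ℝ) :
    (x • 1 -
        coronaStar (Matrix.diagonal μ1 * A1.map abs * Matrix.diagonal μ1) A2 μ1 μ2).det
      = x ^ (n1 * (n2 - 1)) *
        ((x ^ 4 - (2 * (n2 : ℝ) + 1) * x ^ 2 - 2 * (n2 : ℝ) * μ2 0 * x) •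
            (1 : Matrix (Fin n1) (Fin n1) ℝ)
          - (x ^ 2 - (n2 : ℝ)) • A1 ^ 2).det :=
  corona_adjacency_star_general n1 n2 hn2 A1 μ1 hμ1 hbal1 σ hσ A2 hA2c hA2row hA2col hA2leaf μ2 hμ2c
    hμ2leaf x
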